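/- Under uniform independence sampling of a finite graph, the induced-subgraph edge weight estimator is consistent: for any disjoint nonempty subsets A, B of the vertex set V, the sequence of random variables (Σ_{i=1}^{n} Σ_{j=1}^{n} 1{X_i ∈ A, X_j ∈ B, and {X_i, X_j} is an edge of G}) / (|S_A(n)|·|S_B(n)|) converges in probability to w(A,B) = |E_{A,B}|/(|A|·|B|) as the sample size n → ∞. -/

import Mathlib

open MeasureTheory ProbabilityTheory Filter Finset
open scoped Topology

private lemma div_div_div_cancel_aux (a b c : ℝ) (hc : c ≠ 0) : (a / c) / (b / c) = a / b := by
  rcases eq_or_ne b 0 with h | h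
  · simp [h]
  · field_simp

theorem uis_induced_edge_weight_consistent
    {V : Type*} [Fintype V] [Nonempty V] [DecidableEq V]
    [MeasurableSpace V] [MeasurableSingletonClass V]
    (G : SimpleGraph V) [DecidableRel G.Adj]
    {Ω : Type*} [MeasurableSpace Ω] (μ : Measure Ω) [IsProbabilityMeasure μ]
    (X : ℕ → Ω → V)
    (hmeas : ∀ i, Measurable (X i))
    (hindep : iIndepFun X μ)
    (hunif : ∀ i v, μ {ω | X i ω = v} = (Fintype.card V : ENNReal)⁻¹)
    (A B : Finset V) (hA : A.Nonempty) (hB : B.Nonempty) (hAB : Disjoint A B) :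
    ∀ ε > (0 : ℝ),
      Tendsto
        (fun n => μ {ω |
          ε < |(∑ i ∈ Finset.range n, ∑ j ∈ Finset.range n,
                  (if X i ω ∈ A ∧ X j ω ∈ B ∧ G.Adj (X i ω) (X j ω) then (1 : ℝ) else 0))
                / ((((Finset.range n).filter (fun i => X i ω ∈ A)).card : ℝ) * ((((Finset.range n).filter (fun i => X i ω ∈ B)).card : ℝ)))
              - ((((A ×ˢ B).filter (fun p => G.Adj p.1 p.2)).card : ℝ) / ((A.card : ℝ) * (B.card : ℝ)))|})
        atTop (𝓝 0) := by
  classical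
  set s : Finset (V × V) := (A ×ˢ B).filter (fun p => G.Adj p.1 p.2) with hs
  set θ : ℝ := (s.card : ℝ) / ((A.card : ℝ) * (B.card : ℝ)) with hθ
  set cnt : V → ℕ → Ω → ℝ :=
    fun v n ω => ∑ i ∈ Finset.range n, (if X i ω = v then (1 : ℝ) else 0) with hcnt
  -- identity 1 : double sum = sum over edge pairs of counts
  have I1 : ∀ n ω,
      (∑ i ∈ Finset.range n, ∑ j ∈ Finset.range n,
        (if X i ω ∈ A ∧ X j ω ∈ B ∧ G.Adj (X i ω) (X j ω) then (1 : ℝ) else 0))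
      = ∑ p ∈ s, cnt p.1 n ω * cnt p.2 n ω := by
    intro n ω
    have key : ∀ i j : ℕ,
        (if X i ω ∈ A ∧ X j ω ∈ B ∧ G.Adj (X i ω) (X j ω) then (1 : ℝ) else 0)
        = ∑ p ∈ s, (if (X i ω, X j ω) = p then (1 : ℝ) else 0) := by
      intro i j
      rw [Finset.sum_ite_eq s (X i ω, X j ω) (fun _ => (1:ℝ))]
      simp [hs, Finset.mem_filter, Finset.mem_product, and_assoc]
    calc
      (∑ i ∈ Finset.range n, ∑ j ∈ Finset.range n,
          (if X i ω ∈ A ∧ X j ω ∈ B ∧ G.Adj (X i ω) (X j ω) then (1 : ℝ) else 0))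
        = ∑ i ∈ Finset.range n, ∑ j ∈ Finset.range n, ∑ p ∈ s,
            (if (X i ω, X j ω) = p then (1 : ℝ) else 0) := by
          simp only [key]
      _ = ∑ p ∈ s, ∑ i ∈ Finset.range n, ∑ j ∈ Finset.range n,
            (if (X i ω, X j ω) = p then (1 : ℝ) else 0) := by
          rw [show (∑ i ∈ Finset.range n, ∑ j ∈ Finset.range n, ∑ p ∈ s,
              (if (X i ω, X j ω) = p then (1 : ℝ) else 0))
            = ∑ i ∈ Finset.range n, ∑ p ∈ s, ∑ j ∈ Finset.range n,
              (if (X i ω, X j ω) = p then (1 : ℝ) else 0) from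
            Finset.sum_congr rfl fun i _ => Finset.sum_comm]
          exact Finset.sum_comm
      _ = ∑ p ∈ s, cnt p.1 n ω * cnt p.2 n ω := by
          refine Finset.sum_congr rfl fun p _ => ?_
          rw [hcnt, Finset.sum_mul_sum]
          refine Finset.sum_congr rfl fun i _ => Finset.sum_congr rfl fun j _ => ?_
          by_cases h1 : X i ω = p.1 <;> by_cases h2 : X j ω = p.2 <;>
            simp [Prod.ext_iff, h1, h2]
  -- identity 2 : filtered card = sum of counts
  have I2 : ∀ (C : Finset V) (n : ℕ) (ω : Ω),
      ((((Finset.range n).filter (fun i => X i ω ∈ C)).card : ℝ))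
      = ∑ a ∈ C, cnt a n ω := by
    intro C n ω
    rw [Finset.card_filter]
    push_cast
    rw [show (∑ i ∈ Finset.range n, if X i ω ∈ C then (1:ℝ) else 0)
        = ∑ i ∈ Finset.range n, ∑ a ∈ C, (if X i ω = a then (1:ℝ) else 0) from
      Finset.sum_congr rfl fun i _ => by
        rw [Finset.sum_ite_eq C (X i ω) (fun _ => (1:ℝ))]]
    exact Finset.sum_comm
  -- SLLN for each vertex
  have cardV_pos : 0 < (Fintype.card V : ℝ) := by positivity
  have hae : ∀ᵐ ω ∂μ, ∀ v : V,
      Tendsto (fun n => cnt v n ω / n) atTop (𝓝 ((Fintype.card V : ℝ)⁻¹)) := by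
    rw [ae_all_iff]
    intro v
    set g : V → ℝ := fun x => if x = v then (1 : ℝ) else 0 with hg
    have hgm : Measurable g := measurable_of_countable g
    set f : ℕ → Ω → ℝ := fun i ω => if X i ω = v then (1 : ℝ) else 0 with hf
    have hfm : ∀ i, Measurable (f i) := fun i => hgm.comp (hmeas i)
    have hint : Integrable (f 0) μ := by
      refine (integrable_const (1 : ℝ)).mono' (hfm 0).aestronglyMeasurable ?_
      filter_upwards with ω
      simp only [hf]
      split <;> simp
    have hindep' : Pairwise (Function.onFun (IndepFun · · μ) f) := by
      intro i j hij
      exact (hindep.indepFun hij).comp hgm hgm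
    have hident : ∀ i, IdentDistrib (f i) (f 0) μ μ := by
      intro i
      have hXid : IdentDistrib (X i) (X 0) μ μ := by
        refine ⟨(hmeas i).aemeasurable, (hmeas 0).aemeasurable, ?_⟩
        refine Measure.ext_of_singleton fun a => ?_
        rw [Measure.map_apply (hmeas i) (measurableSet_singleton a),
          Measure.map_apply (hmeas 0) (measurableSet_singleton a)]
        have h1 : X i ⁻¹' {a} = {ω | X i ω = a} := rfl
        have h2 : X 0 ⁻¹' {a} = {ω | X 0 ω = a} := rfl
        rw [h1, h2, hunif i a, hunif 0 a]
      exact hXid.comp hgm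
    have hexp : μ[f 0] = (Fintype.card V : ℝ)⁻¹ := by
      have hfe : f 0 = Set.indicator {ω | X 0 ω = v} (fun _ => (1:ℝ)) := by
        funext ω
        simp [hf, Set.indicator_apply, Set.mem_setOf_eq]
      rw [hfe]
      rw [integral_indicator_const (1:ℝ)
        (show MeasurableSet {ω | X 0 ω = v} from hmeas 0 (measurableSet_singleton v))]
      rw [measureReal_def, hunif 0 v]
      simp [ENNReal.toReal_inv]
    have := strong_law_ae_real f hint hindep' hident
    rw [hexp] at this
    exact this
  -- abbreviate the estimator
  set F : ℕ → Ω → ℝ := fun n ω =>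
    (∑ i ∈ Finset.range n, ∑ j ∈ Finset.range n,
        (if X i ω ∈ A ∧ X j ω ∈ B ∧ G.Adj (X i ω) (X j ω) then (1 : ℝ) else 0))
      / ((((Finset.range n).filter (fun i => X i ω ∈ A)).card : ℝ)
          * ((((Finset.range n).filter (fun i => X i ω ∈ B)).card : ℝ)))
    with hF
  have hFeq : ∀ n, F n = fun ω =>
      (∑ p ∈ s, cnt p.1 n ω * cnt p.2 n ω)
        / ((∑ a ∈ A, cnt a n ω) * (∑ b ∈ B, cnt b n ω)) := by
    intro n
    funext ω
    rw [hF]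
    simp only
    rw [I1 n ω, I2 A n ω, I2 B n ω]
  have hcm : ∀ (v : V) (n : ℕ), Measurable (fun ω => cnt v n ω) := by
    intro v n
    refine Finset.measurable_sum _ fun i _ => ?_
    exact Measurable.ite (hmeas i (measurableSet_singleton v)) measurable_const
      measurable_const
  have hFmeas : ∀ n, AEStronglyMeasurable (F n) μ := by
    intro n
    rw [hFeq n]
    exact ((Finset.measurable_sum s fun p _ => (hcm p.1 n).mul (hcm p.2 n)).div
      ((Finset.measurable_sum A fun a _ => hcm a n).mul
        (Finset.measurable_sum B fun b _ => hcm b n))).aestronglyMeasurable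
  have hAc : (0:ℝ) < A.card := by exact_mod_cast hA.card_pos
  have hBc : (0:ℝ) < B.card := by exact_mod_cast hB.card_pos
  set c : ℝ := (Fintype.card V : ℝ)⁻¹ with hc
  have hcpos : 0 < c := by positivity
  have hFtend : ∀ᵐ ω ∂μ, Tendsto (fun n => F n ω) atTop (𝓝 θ) := by
    filter_upwards [hae] with ω hω
    have hnum : Tendsto (fun n => ∑ p ∈ s, (cnt p.1 n ω / n) * (cnt p.2 n ω / n))
        atTop (𝓝 (∑ _p ∈ s, c * c)) :=
      tendsto_finset_sum _ fun p _ => (hω p.1).mul (hω p.2)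
    have hdenA : Tendsto (fun n => ∑ a ∈ A, cnt a n ω / n) atTop (𝓝 (∑ _a ∈ A, c)) :=
      tendsto_finset_sum _ fun a _ => hω a
    have hdenB : Tendsto (fun n => ∑ b ∈ B, cnt b n ω / n) atTop (𝓝 (∑ _b ∈ B, c)) :=
      tendsto_finset_sum _ fun b _ => hω b
    have hdenne : (∑ _a ∈ A, c) * (∑ _b ∈ B, c) ≠ 0 := by
      rw [Finset.sum_const, Finset.sum_const, nsmul_eq_mul, nsmul_eq_mul]
      positivity
    have hlim := hnum.div (hdenA.mul hdenB) hdenne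
    have hL : (∑ _p ∈ s, c * c) / ((∑ _a ∈ A, c) * (∑ _b ∈ B, c)) = θ := by
      rw [Finset.sum_const, Finset.sum_const, Finset.sum_const, nsmul_eq_mul,
        nsmul_eq_mul, nsmul_eq_mul, hθ,
        div_eq_div_iff (mul_pos (mul_pos hAc hcpos) (mul_pos hBc hcpos)).ne'
          (mul_pos hAc hBc).ne']
      ring
    rw [hL] at hlim
    refine Tendsto.congr' ?_ hlim
    filter_upwards [eventually_ge_atTop 1] with n hn
    have hn0 : ((n:ℝ) * n) ≠ 0 := by
      have h1 : (1:ℝ) ≤ n := by exact_mod_cast hn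
      positivity
    have e1 : F n ω = (∑ p ∈ s, cnt p.1 n ω * cnt p.2 n ω)
        / ((∑ a ∈ A, cnt a n ω) * (∑ b ∈ B, cnt b n ω)) := by rw [hFeq n]
    have e2 : (∑ p ∈ s, (cnt p.1 n ω / n) * (cnt p.2 n ω / n))
        = (∑ p ∈ s, cnt p.1 n ω * cnt p.2 n ω) / ((n:ℝ) * n) := by
      rw [Finset.sum_div]
      exact Finset.sum_congr rfl fun p _ => div_mul_div_comm _ _ _ _
    have e3 : ((∑ a ∈ A, cnt a n ω / n) * (∑ b ∈ B, cnt b n ω / n))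
        = ((∑ a ∈ A, cnt a n ω) * (∑ b ∈ B, cnt b n ω)) / ((n:ℝ) * n) := by
      rw [← Finset.sum_div, ← Finset.sum_div]
      exact div_mul_div_comm _ _ _ _
    show (∑ p ∈ s, (cnt p.1 n ω / n) * (cnt p.2 n ω / n))
        / ((∑ a ∈ A, cnt a n ω / n) * (∑ b ∈ B, cnt b n ω / n)) = F n ω
    rw [e1, e2, e3]
    exact div_div_div_cancel_aux _ _ _ hn0
  have hTIM : TendstoInMeasure μ F atTop (fun _ => θ) :=
    tendstoInMeasure_of_tendsto_ae hFmeas hFtend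
  intro ε hε
  refine tendsto_of_tendsto_of_tendsto_of_le_of_le tendsto_const_nhds (hTIM (ENNReal.ofReal ε) (ENNReal.ofReal_pos.mpr hε))
    (fun n => by simp) (fun n => measure_mono fun ω hω => ?_)
  simp only [Set.mem_setOf_eq, edist_dist, Real.dist_eq] at hω ⊢
  exact ENNReal.ofReal_le_ofReal (le_of_lt hω)
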